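/- Let V be a finite-dimensional real vector space of dimension at least 4, and let ω₁ and ω₂ be linear symplectic forms on V such that every complex structure compatible with ω₁ is tamed by ω₂. Then for every pair of linearly independent vectors v, w ∈ V one has ω₁(v, w) = 0 if and only if ω₂(v, w) = 0. -/

import Mathlib

/-!
Any pair `e, f` with `ω₁ e f = 1` is of the form `(e, J e)` for some complex structure `J`
compatible with `ω₁`: `(a, b, x) ↦ a • e + b • f + x` identifies `ℝ² × W`, with `W` the
`ω₁`-orthogonal complement of `span {e, f}`, with `V`, turning `ω₁` into the sum of the standard
area form and `ω₁ | W`; take the rotation on `ℝ²` and, by induction on the dimension, a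
compatible complex structure on `W`. Taming then forces `0 < ω₂ e f`.
If `ω₁ v w ≠ 0`, applying this to `(ω₁ v w)⁻¹ • w` gives `ω₂ v w ≠ 0`. If `ω₁ v w = 0` and
`ω₁ v f = 1`, then `ω₁ v (f + t • w) = 1` for every real `t`, so the affine function
`t ↦ ω₂ v f + t * ω₂ v w` is everywhere positive and `ω₂ v w = 0`.
-/

/-- A linear symplectic form: an alternating, nondegenerate bilinear form. -/
def IsSymplecticForm {V : Type*} [AddCommGroup V] [Module ℝ V]
    (ω : V →ₗ[ℝ] V →ₗ[ℝ] ℝ) : Prop :=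
  (∀ v, ω v v = 0) ∧ ∀ v, v ≠ 0 → ∃ w, ω v w ≠ 0

/-- A complex structure: a linear endomorphism with `J ∘ J = -id`. -/
def IsComplexStructure {V : Type*} [AddCommGroup V] [Module ℝ V]
    (J : V →ₗ[ℝ] V) : Prop :=
  ∀ v, J (J v) = -v

/-- `J` is tamed by `ω` if `ω(v, J v) > 0` for all `v ≠ 0`. -/
def Tames {V : Type*} [AddCommGroup V] [Module ℝ V]
    (ω : V →ₗ[ℝ] V →ₗ[ℝ] ℝ) (J : V →ₗ[ℝ] V) : Prop :=
  ∀ v, v ≠ 0 → 0 < ω v (J v)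

/-- `J` is compatible with `ω`: tamed by `ω` and `ω(Ju, Jv) = ω(u, v)`. -/
def CompatibleWith {V : Type*} [AddCommGroup V] [Module ℝ V]
    (ω : V →ₗ[ℝ] V →ₗ[ℝ] ℝ) (J : V →ₗ[ℝ] V) : Prop :=
  (∀ v, v ≠ 0 → 0 < ω v (J v)) ∧ ∀ u v, ω (J u) (J v) = ω u v

open LinearMap Module

section

variable {V : Type*} [AddCommGroup V] [Module ℝ V]

theorem IsSymplecticForm.exists_eq_one {ω : V →ₗ[ℝ] V →ₗ[ℝ] ℝ} (hω : IsSymplecticForm ω)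
    {v : V} (hv : v ≠ 0) : ∃ f, ω v f = 1 := by
  obtain ⟨f, hf⟩ := hω.2 v hv
  exact ⟨(ω v f)⁻¹ • f, by rw [map_smul, smul_eq_mul, inv_mul_cancel₀ hf]⟩

theorem IsSymplecticForm.isAlt {ω : V →ₗ[ℝ] V →ₗ[ℝ] ℝ} (hω : IsSymplecticForm ω) : ω.IsAlt :=
  hω.1

theorem CompatibleWith.nonneg {ω : V →ₗ[ℝ] V →ₗ[ℝ] ℝ} {J : V →ₗ[ℝ] V} (hJ : CompatibleWith ω J)
    (v : V) : 0 ≤ ω v (J v) := by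
  rcases eq_or_ne v 0 with rfl | hv
  · simp
  · exact (hJ.1 v hv).le

section Conj

variable {V' : Type*} [AddCommGroup V'] [Module ℝ V'] (L : V' ≃ₗ[ℝ] V) {J : V' →ₗ[ℝ] V'}

theorem IsComplexStructure.conj (hJ : IsComplexStructure J) : IsComplexStructure (L.conj J) :=
  fun v => by simp [hJ _]

theorem CompatibleWith.conj {ω : V →ₗ[ℝ] V →ₗ[ℝ] ℝ}
    (hJ : CompatibleWith (ω.compl₁₂ (L : V' →ₗ[ℝ] V) L) J) : CompatibleWith ω (L.conj J) := by
  refine ⟨fun v hv => ?_, fun u v => ?_⟩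
  · simpa using hJ.1 (L.symm v) (by simpa using hv)
  · simpa using hJ.2 (L.symm u) (L.symm v)

end Conj

section Prod

variable {V₁ V₂ : Type*} [AddCommGroup V₁] [Module ℝ V₁] [AddCommGroup V₂] [Module ℝ V₂]
  {ω₁ : V₁ →ₗ[ℝ] V₁ →ₗ[ℝ] ℝ} {ω₂ : V₂ →ₗ[ℝ] V₂ →ₗ[ℝ] ℝ} {J₁ : V₁ →ₗ[ℝ] V₁} {J₂ : V₂ →ₗ[ℝ] V₂}

def prodForm (ω₁ : V₁ →ₗ[ℝ] V₁ →ₗ[ℝ] ℝ) (ω₂ : V₂ →ₗ[ℝ] V₂ →ₗ[ℝ] ℝ) :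
    V₁ × V₂ →ₗ[ℝ] V₁ × V₂ →ₗ[ℝ] ℝ :=
  ω₁.compl₁₂ (fst ℝ V₁ V₂) (fst ℝ V₁ V₂) + ω₂.compl₁₂ (snd ℝ V₁ V₂) (snd ℝ V₁ V₂)

@[simp]
theorem prodForm_apply (p q : V₁ × V₂) : prodForm ω₁ ω₂ p q = ω₁ p.1 q.1 + ω₂ p.2 q.2 :=
  rfl

theorem IsComplexStructure.prodMap (h₁ : IsComplexStructure J₁) (h₂ : IsComplexStructure J₂) :
    IsComplexStructure (J₁.prodMap J₂) :=
  fun p => Prod.ext (h₁ p.1) (h₂ p.2)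

theorem CompatibleWith.prodMap (h₁ : CompatibleWith ω₁ J₁) (h₂ : CompatibleWith ω₂ J₂) :
    CompatibleWith (prodForm ω₁ ω₂) (J₁.prodMap J₂) := by
  refine ⟨fun ⟨x, y⟩ hp => ?_, fun p q => by simp [h₁.2, h₂.2]⟩
  simp only [prodForm_apply, prodMap_apply]
  rcases eq_or_ne x 0 with rfl | hx
  · have hy : y ≠ 0 := by rintro rfl; exact hp rfl
    simpa using h₂.1 y hy
  · exact add_pos_of_pos_of_nonneg (h₁.1 x hx) (h₂.nonneg y)

end Prod

def planeForm : ℝ × ℝ →ₗ[ℝ] ℝ × ℝ →ₗ[ℝ] ℝ :=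
  (fst ℝ ℝ ℝ).smulRight (snd ℝ ℝ ℝ) - (snd ℝ ℝ ℝ).smulRight (fst ℝ ℝ ℝ)

@[simp]
theorem planeForm_apply (p q : ℝ × ℝ) : planeForm p q = p.1 * q.2 - p.2 * q.1 := by
  simp [planeForm]

def planeRot : ℝ × ℝ →ₗ[ℝ] ℝ × ℝ :=
  (-snd ℝ ℝ ℝ).prod (fst ℝ ℝ ℝ)

@[simp]
theorem planeRot_apply (p : ℝ × ℝ) : planeRot p = (-p.2, p.1) :=
  rfl

theorem isComplexStructure_planeRot : IsComplexStructure planeRot :=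
  fun _ => rfl

theorem compatibleWith_planeRot : CompatibleWith planeForm planeRot := by
  refine ⟨fun ⟨a, b⟩ hp => ?_, fun p q => by simp; ring⟩
  have : a ≠ 0 ∨ b ≠ 0 := by contrapose! hp; simp [hp]
  simp only [planeForm_apply, planeRot_apply]
  rcases this with h | h <;> nlinarith [mul_self_pos.2 h, mul_self_nonneg a, mul_self_nonneg b]

section PairDecomposition

variable {ω : V →ₗ[ℝ] V →ₗ[ℝ] ℝ} {e f : V}

variable (ω e f) in
def pairCompl : Submodule ℝ V :=
  ker (ω e) ⊓ ker (ω f)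

theorem mem_pairCompl {x : V} : x ∈ pairCompl ω e f ↔ ω e x = 0 ∧ ω f x = 0 :=
  Iff.rfl

variable (hω : ω.IsAlt) (hef : ω e f = 1)
include hω hef

theorem sub_sub_mem_pairCompl (u : V) : u - ω u f • e - ω e u • f ∈ pairCompl ω e f := by
  have hfe : ω f e = -1 := by rw [← hω.neg, hef]
  refine mem_pairCompl.2 ⟨?_, ?_⟩
  · simp [hef, hω.self_eq_zero]
  · simp [hfe, hω.self_eq_zero, ← hω.neg u f]

def pairDecomp : ((ℝ × ℝ) × pairCompl ω e f) ≃ₗ[ℝ] V :=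
  LinearEquiv.ofLinearMap
    (((toSpanSingleton ℝ V e).coprod (toSpanSingleton ℝ V f)).coprod (pairCompl ω e f).subtype)
    (((ω.flip f).prod (ω e)).prod <|
      codRestrict _ (LinearMap.id - (ω.flip f).smulRight e - (ω e).smulRight f)
        fun u => by simpa using sub_sub_mem_pairCompl hω hef u)
    (by ext u; simp)
    (by
      refine LinearMap.ext fun ⟨⟨a, b⟩, x⟩ => ?_
      obtain ⟨hex, hfx⟩ := mem_pairCompl.1 x.2
      ext
      · simp [hef, hω.eq_iff.1 hfx, hω.self_eq_zero]
      · simp [hef, hex, hω.self_eq_zero]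
      · simp [hef, hex, hω.eq_iff.1 hfx, hω.self_eq_zero])

@[simp]
theorem pairDecomp_apply (a b : ℝ) (x : pairCompl ω e f) :
    pairDecomp hω hef ((a, b), x) = a • e + b • f + x :=
  rfl

theorem compl₁₂_pairDecomp :
    ω.compl₁₂ (pairDecomp hω hef : _ →ₗ[ℝ] V) (pairDecomp hω hef) =
      prodForm planeForm (ω.domRestrict₁₂ (pairCompl ω e f) (pairCompl ω e f)) := by
  have hfe : ω f e = -1 := by rw [← hω.neg, hef]
  refine LinearMap.ext fun ⟨⟨a, b⟩, x⟩ => LinearMap.ext fun ⟨⟨c, d⟩, y⟩ => ?_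
  obtain ⟨hex, hfx⟩ := mem_pairCompl.1 x.2
  obtain ⟨hey, hfy⟩ := mem_pairCompl.1 y.2
  simp [hef, hfe, hey, hfy, hω.eq_iff.1 hex, hω.eq_iff.1 hfx, hω.self_eq_zero,
    domRestrict₁₂_apply]
  ring

theorem exists_compatible_apply_eq_of_pairCompl
    {JW : pairCompl ω e f →ₗ[ℝ] pairCompl ω e f} (hJW : IsComplexStructure JW)
    (hJWω : CompatibleWith (ω.domRestrict₁₂ (pairCompl ω e f) (pairCompl ω e f)) JW) :
    ∃ J, IsComplexStructure J ∧ CompatibleWith ω J ∧ J e = f := by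
  let L := pairDecomp hω hef
  refine ⟨L.conj (planeRot.prodMap JW), (isComplexStructure_planeRot.prodMap hJW).conj L,
    .conj L ?_, ?_⟩
  · rw [compl₁₂_pairDecomp]
    exact compatibleWith_planeRot.prodMap hJWω
  · have hLe : L.symm e = ((1, 0), 0) := L.symm_apply_eq.2 (by simp [L])
    simp [hLe, L]

end PairDecomposition

theorem isSymplecticForm_domRestrict₁₂_pairCompl {ω : V →ₗ[ℝ] V →ₗ[ℝ] ℝ}
    (hω : IsSymplecticForm ω) {e f : V} (hef : ω e f = 1) :
    IsSymplecticForm (ω.domRestrict₁₂ (pairCompl ω e f) (pairCompl ω e f)) := by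
  refine ⟨fun x => hω.1 x, fun x hx => ?_⟩
  obtain ⟨u, hu⟩ := hω.2 x (by simpa using hx)
  refine ⟨((pairDecomp hω.isAlt hef).symm u).2, ?_⟩
  have hxu := LinearMap.congr_fun₂ (compl₁₂_pairDecomp hω.isAlt hef) ((0, 0), x)
    ((pairDecomp hω.isAlt hef).symm u)
  simp only [compl₁₂_apply, LinearEquiv.coe_coe, pairDecomp_apply, zero_smul, zero_add,
    LinearEquiv.apply_symm_apply, prodForm_apply, planeForm_apply, zero_mul, sub_self] at hxu
  exact hxu ▸ hu

theorem finrank_pairCompl_lt [FiniteDimensional ℝ V] {ω : V →ₗ[ℝ] V →ₗ[ℝ] ℝ} {e f : V}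
    (hef : ω e f = 1) : finrank ℝ (pairCompl ω e f) < finrank ℝ V :=
  Submodule.finrank_lt fun h => by
    simpa [hef] using (mem_pairCompl.1 (h ▸ Submodule.mem_top : f ∈ pairCompl ω e f)).1

theorem IsSymplecticForm.exists_compatible [FiniteDimensional ℝ V] {ω : V →ₗ[ℝ] V →ₗ[ℝ] ℝ}
    (hω : IsSymplecticForm ω) : ∃ J, IsComplexStructure J ∧ CompatibleWith ω J := by
  induction hn : finrank ℝ V using Nat.strong_induction_on generalizing V with
  | _ n ih =>
  rcases subsingleton_or_nontrivial V with hV | hV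
  · exact ⟨0, fun v => Subsingleton.elim _ _, fun v hv => (hv (Subsingleton.elim _ _)).elim,
      fun u v => by simp [Subsingleton.elim u 0]⟩
  obtain ⟨e, he⟩ := exists_ne (0 : V)
  obtain ⟨f, hef⟩ := hω.exists_eq_one he
  obtain ⟨JW, hJW, hJWω⟩ := ih _ (hn ▸ finrank_pairCompl_lt hef)
    (isSymplecticForm_domRestrict₁₂_pairCompl hω hef) rfl
  obtain ⟨J, hJ, hJω, -⟩ := exists_compatible_apply_eq_of_pairCompl hω.isAlt hef hJW hJWω
  exact ⟨J, hJ, hJω⟩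

theorem IsSymplecticForm.exists_compatible_apply_eq [FiniteDimensional ℝ V]
    {ω : V →ₗ[ℝ] V →ₗ[ℝ] ℝ} (hω : IsSymplecticForm ω) {e f : V} (hef : ω e f = 1) :
    ∃ J, IsComplexStructure J ∧ CompatibleWith ω J ∧ J e = f := by
  obtain ⟨JW, hJW, hJWω⟩ := (isSymplecticForm_domRestrict₁₂_pairCompl hω hef).exists_compatible
  exact exists_compatible_apply_eq_of_pairCompl hω.isAlt hef hJW hJWω

theorem pos_of_forall_compatible_tames [FiniteDimensional ℝ V] {ω₁ ω₂ : V →ₗ[ℝ] V →ₗ[ℝ] ℝ}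
    (h₁ : IsSymplecticForm ω₁)
    (h : ∀ J : V →ₗ[ℝ] V, IsComplexStructure J → CompatibleWith ω₁ J → Tames ω₂ J)
    {e f : V} (hef : ω₁ e f = 1) : 0 < ω₂ e f := by
  obtain ⟨J, hJ, hJω, rfl⟩ := h₁.exists_compatible_apply_eq hef
  exact h J hJ hJω e (by rintro rfl; simp at hef)

theorem eq_zero_of_forall_pos_add_mul {a b : ℝ} (h : ∀ t, 0 < a + t * b) : b = 0 := by
  by_contra hb
  have := h (-(a + 1) / b)
  rw [div_mul_cancel₀ _ hb] at this
  linarith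

end

theorem vanishing_is_common_for_taming_forms_general
    {V : Type*} [AddCommGroup V] [Module ℝ V] [FiniteDimensional ℝ V]
    (ω₁ ω₂ : V →ₗ[ℝ] V →ₗ[ℝ] ℝ)
    (h₁ : IsSymplecticForm ω₁)
    (h : ∀ J : V →ₗ[ℝ] V, IsComplexStructure J → CompatibleWith ω₁ J → Tames ω₂ J)
    (v w : V) :
    ω₁ v w = 0 ↔ ω₂ v w = 0 := by
  have key {f : V} : ω₁ v f = 1 → 0 < ω₂ v f := pos_of_forall_compatible_tames h₁ h
  constructor
  · intro h₁vw
    rcases eq_or_ne v 0 with rfl | hv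
    · simp
    obtain ⟨f, hf⟩ := h₁.exists_eq_one hv
    refine eq_zero_of_forall_pos_add_mul (a := ω₂ v f) fun t => ?_
    simpa using key (f := f + t • w) (by simp [hf, h₁vw])
  · intro h₂vw
    by_contra h₁vw
    simpa [h₂vw] using key (f := (ω₁ v w)⁻¹ • w) (by simp [h₁vw])

theorem vanishing_is_common_for_taming_forms
    {V : Type*} [AddCommGroup V] [Module ℝ V] [FiniteDimensional ℝ V]
    (hdim : 4 ≤ Module.finrank ℝ V)
    (ω₁ ω₂ : V →ₗ[ℝ] V →ₗ[ℝ] ℝ)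
    (h₁ : IsSymplecticForm ω₁) (h₂ : IsSymplecticForm ω₂)
    (h : ∀ J : V →ₗ[ℝ] V, IsComplexStructure J → CompatibleWith ω₁ J → Tames ω₂ J)
    (v w : V) (hvw : LinearIndependent ℝ ![v, w]) :
    ω₁ v w = 0 ↔ ω₂ v w = 0 :=
  vanishing_is_common_for_taming_forms_general ω₁ ω₂ h₁ h v w
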